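/- With random initialization |a_i⁽⁰⁾| ≤ m^{−α}, ‖w_i⁽⁰⁾‖₂ ≤ d^{1/2} m^{−β}, |b_i⁽⁰⁾| ≤ m^{−β}, and any W* with ‖W*‖_{2,∞} ≤ ‖f‖_F/m, the difference between the pseudo network g(x; W⁽⁰⁾+W*) and the biasless network g^{(b)}(x; W*) satisfies, for every x in the unit ball, |g(x; W⁽⁰⁾+W*) − g^{(b)}(x; W*)| ≤ C_d' · m^{1−α−3β}, where C_d' = 4d^{5/2} + 12d² + 60d^{3/2} + 76d + 24d^{1/2}. -/
import Mathlib


open RealInnerProductSpace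

private lemma stmt9_aux (aa s t r u dd X ind : ℝ) :
    aa * (2 * dd * (s + r + t) * (s + t) ^ 2
        + 12 * (s + r + t) * s * (s + t)
        + 6 * (s + r + t) * u * (X - 1)) * ind
      - aa * (2 * dd * r * (s + t) ^ 2
        + 12 * r * s * (s + t)
        + 6 * r * u * (X - 1)) * ind
    = aa * (2 * dd * (s + t) ^ 3 + 12 * s * (s + t) ^ 2
        + 6 * (s + t) * u * (X - 1)) * ind := by ring

set_option maxHeartbeats 1000000 in
/-- Difference between the pseudo network `g(x; W⁽⁰⁾ + W*)` and the biasless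
network `g⁽ᵇ⁾(x; W*)`: for initialization bounded as `|aᵢ⁽⁰⁾| ≤ m^{-α}`,
`‖wᵢ⁽⁰⁾‖ ≤ √d m^{-β}`, `|bᵢ⁽⁰⁾| ≤ m^{-β}` and `‖wᵢ*‖ ≤ B/m`, the difference is
at most `C_d' m^{1-α-3β}` on the unit ball, with
`C_d' = 4d^{5/2} + 12d² + 60d^{3/2} + 76d + 24d^{1/2}`. -/
theorem stmt9 {d : ℕ} (m : ℕ) (hd : 0 < d) (hm : 0 < m) (α β B : ℝ)
    (hα : 0 ≤ α) (hβ : 0 ≤ β)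
    (a0 b0 : Fin m → ℝ) (w0 Wstar : Fin m → EuclideanSpace ℝ (Fin d))
    (ha : ∀ i, |a0 i| ≤ (m : ℝ) ^ (-α))
    (hw : ∀ i, ‖w0 i‖ ≤ Real.sqrt d * (m : ℝ) ^ (-β))
    (hb : ∀ i, |b0 i| ≤ (m : ℝ) ^ (-β))
    (hW : ∀ i, ‖Wstar i‖ ≤ B / m)
    (x : EuclideanSpace ℝ (Fin d)) (hx : ‖x‖ ≤ 1) :
    |(∑ i, a0 i *
        (2 * d * (⟪w0 i + Wstar i, x⟫ + b0 i) * (⟪w0 i, x⟫ + b0 i) ^ 2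
          + 12 * (⟪w0 i + Wstar i, x⟫ + b0 i) * ⟪w0 i, x⟫ * (⟪w0 i, x⟫ + b0 i)
          + 6 * (⟪w0 i + Wstar i, x⟫ + b0 i) * ⟪w0 i, w0 i⟫ * (‖x‖ ^ 2 - 1)) *
        (if 0 ≤ ⟪w0 i, x⟫ + b0 i then 1 else 0)) -
      (∑ i, a0 i *
        (2 * d * ⟪Wstar i, x⟫ * (⟪w0 i, x⟫ + b0 i) ^ 2
          + 12 * ⟪Wstar i, x⟫ * ⟪w0 i, x⟫ * (⟪w0 i, x⟫ + b0 i)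
          + 6 * ⟪Wstar i, x⟫ * ⟪w0 i, w0 i⟫ * (‖x‖ ^ 2 - 1)) *
        (if 0 ≤ ⟪w0 i, x⟫ + b0 i then 1 else 0))| ≤
      (4 * (d : ℝ) ^ ((5 : ℝ) / 2) + 12 * (d : ℝ) ^ 2
        + 60 * (d : ℝ) ^ ((3 : ℝ) / 2) + 76 * d + 24 * (d : ℝ) ^ ((1 : ℝ) / 2)) *
        (m : ℝ) ^ (1 - α - 3 * β) := by
  have hm' : (0:ℝ) < m := by exact_mod_cast hm
  set p := (m : ℝ) ^ (-β) with hp_def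
  set A := (m : ℝ) ^ (-α) with hA_def
  set sd := Real.sqrt d with hsd_def
  have hp0 : 0 ≤ p := Real.rpow_nonneg hm'.le _
  have hA0 : 0 ≤ A := Real.rpow_nonneg hm'.le _
  have hsd1 : (1:ℝ) ≤ sd := by
    rw [hsd_def, show (1:ℝ) = Real.sqrt 1 from Real.sqrt_one.symm]
    exact Real.sqrt_le_sqrt (by exact_mod_cast hd)
  have hsd0 : (0:ℝ) ≤ sd := le_trans zero_le_one hsd1
  have hsd2 : sd ^ 2 = (d : ℝ) := Real.sq_sqrt (by positivity)
  set C0 : ℝ := 2 * sd ^ 2 * (sd + 1) ^ 3 + 12 * sd * (sd + 1) ^ 2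
      + 6 * sd ^ 2 * (sd + 1) with hC0
  rw [← Finset.sum_sub_distrib]
  refine le_trans (Finset.abs_sum_le_sum_abs _ _) ?_
  have key : ∀ i : Fin m,
      |a0 i *
        (2 * d * (⟪w0 i + Wstar i, x⟫ + b0 i) * (⟪w0 i, x⟫ + b0 i) ^ 2
          + 12 * (⟪w0 i + Wstar i, x⟫ + b0 i) * ⟪w0 i, x⟫ * (⟪w0 i, x⟫ + b0 i)
          + 6 * (⟪w0 i + Wstar i, x⟫ + b0 i) * ⟪w0 i, w0 i⟫ * (‖x‖ ^ 2 - 1)) *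
        (if 0 ≤ ⟪w0 i, x⟫ + b0 i then 1 else 0) -
       a0 i *
        (2 * d * ⟪Wstar i, x⟫ * (⟪w0 i, x⟫ + b0 i) ^ 2
          + 12 * ⟪Wstar i, x⟫ * ⟪w0 i, x⟫ * (⟪w0 i, x⟫ + b0 i)
          + 6 * ⟪Wstar i, x⟫ * ⟪w0 i, w0 i⟫ * (‖x‖ ^ 2 - 1)) *
        (if 0 ≤ ⟪w0 i, x⟫ + b0 i then 1 else 0)| ≤ A * (C0 * p ^ 3) := by
    intro i
    have hinner : (⟪w0 i + Wstar i, x⟫ : ℝ) = ⟪w0 i, x⟫ + ⟪Wstar i, x⟫ :=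
      inner_add_left _ _ _
    rw [hinner, stmt9_aux]
    set s := (⟪w0 i, x⟫ : ℝ) with hs_def
    set t := b0 i with ht_def
    set u := (⟪w0 i, w0 i⟫ : ℝ) with hu_def
    have hs : |s| ≤ sd * p := by
      calc |s| ≤ ‖w0 i‖ * ‖x‖ := abs_real_inner_le_norm _ _
        _ ≤ (sd * p) * 1 := by
            apply mul_le_mul (hw i) hx (norm_nonneg _) (by positivity)
        _ = sd * p := by ring
    have ht : |t| ≤ p := hb i
    have hst : |s + t| ≤ (sd + 1) * p := by
      calc |s + t| ≤ |s| + |t| := abs_add_le _ _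
        _ ≤ sd * p + p := add_le_add hs ht
        _ = (sd + 1) * p := by ring
    have hu0 : 0 ≤ u := real_inner_self_nonneg
    have hu : u ≤ sd ^ 2 * p ^ 2 := by
      have := real_inner_self_eq_norm_sq (w0 i)
      rw [hu_def, this]
      have h1 : ‖w0 i‖ ≤ sd * p := hw i
      nlinarith [norm_nonneg (w0 i)]
    have hX : |‖x‖ ^ 2 - 1| ≤ 1 := by
      rw [abs_le]
      constructor <;> nlinarith [norm_nonneg x, sq_nonneg ‖x‖]
    have hind : |(if 0 ≤ s + t then (1:ℝ) else 0)| ≤ 1 := by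
      split_ifs <;> simp
    rw [abs_mul, abs_mul]
    have hD : |2 * (d:ℝ) * (s + t) ^ 3 + 12 * s * (s + t) ^ 2
        + 6 * (s + t) * u * (‖x‖ ^ 2 - 1)| ≤ C0 * p ^ 3 := by
      have h1 : |2 * (d:ℝ) * (s + t) ^ 3 + 12 * s * (s + t) ^ 2
          + 6 * (s + t) * u * (‖x‖ ^ 2 - 1)|
          ≤ 2 * (d:ℝ) * |s + t| ^ 3 + 12 * |s| * |s + t| ^ 2
            + 6 * |s + t| * u * |‖x‖ ^ 2 - 1| := by
        calc |2 * (d:ℝ) * (s + t) ^ 3 + 12 * s * (s + t) ^ 2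
            + 6 * (s + t) * u * (‖x‖ ^ 2 - 1)|
            ≤ |2 * (d:ℝ) * (s + t) ^ 3 + 12 * s * (s + t) ^ 2|
              + |6 * (s + t) * u * (‖x‖ ^ 2 - 1)| := abs_add_le _ _
          _ ≤ |2 * (d:ℝ) * (s + t) ^ 3| + |12 * s * (s + t) ^ 2|
              + |6 * (s + t) * u * (‖x‖ ^ 2 - 1)| := by
              have := abs_add_le (2 * (d:ℝ) * (s + t) ^ 3) (12 * s * (s + t) ^ 2)
              linarith
          _ = 2 * (d:ℝ) * |s + t| ^ 3 + 12 * |s| * |s + t| ^ 2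
              + 6 * |s + t| * u * |‖x‖ ^ 2 - 1| := by
              simp only [abs_mul, abs_pow]
              rw [abs_of_nonneg hu0,
                abs_of_nonneg (show (0:ℝ) ≤ (d:ℝ) by positivity)]
              norm_num
      refine h1.trans ?_
      rw [← hsd2]
      calc 2 * sd ^ 2 * |s + t| ^ 3 + 12 * |s| * |s + t| ^ 2
            + 6 * |s + t| * u * |‖x‖ ^ 2 - 1|
          ≤ 2 * sd ^ 2 * ((sd + 1) * p) ^ 3 + 12 * (sd * p) * ((sd + 1) * p) ^ 2
            + 6 * ((sd + 1) * p) * (sd ^ 2 * p ^ 2) * 1 := by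
            gcongr <;> first | positivity | exact abs_nonneg _
        _ = C0 * p ^ 3 := by rw [hC0]; ring
    calc |a0 i| * |2 * (d:ℝ) * (s + t) ^ 3 + 12 * s * (s + t) ^ 2
          + 6 * (s + t) * u * (‖x‖ ^ 2 - 1)| * |(if 0 ≤ s + t then (1:ℝ) else 0)|
        ≤ A * (C0 * p ^ 3) * 1 := by
          apply mul_le_mul _ hind (abs_nonneg _) (by positivity)
          exact mul_le_mul (ha i) hD (abs_nonneg _) hA0
      _ = A * (C0 * p ^ 3) := by ring
  calc (∑ i, |_|) ≤ ∑ _i : Fin m, A * (C0 * p ^ 3) :=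
        Finset.sum_le_sum fun i _ => key i
    _ = m * (A * (C0 * p ^ 3)) := by
        rw [Finset.sum_const, Finset.card_univ, Fintype.card_fin, nsmul_eq_mul]
    _ = C0 * ((m:ℝ) * A * p ^ 3) := by ring
    _ ≤ (4 * (d : ℝ) ^ ((5 : ℝ) / 2) + 12 * (d : ℝ) ^ 2
          + 60 * (d : ℝ) ^ ((3 : ℝ) / 2) + 76 * d + 24 * (d : ℝ) ^ ((1 : ℝ) / 2)) *
        (m : ℝ) ^ (1 - α - 3 * β) := by
        have hmp : (m:ℝ) * A * p ^ 3 = (m : ℝ) ^ (1 - α - 3 * β) := by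
          rw [hA_def, hp_def, ← Real.rpow_natCast ((m:ℝ) ^ (-β)) 3,
            ← Real.rpow_mul hm'.le,
            show (1 - α - 3 * β) = 1 + (-α) + (-β * 3) by ring,
            Real.rpow_add hm', Real.rpow_add hm', Real.rpow_one]
          push_cast
          ring
        rw [hmp]
        apply mul_le_mul_of_nonneg_right _ (Real.rpow_nonneg hm'.le _)
        have hd12 : (d:ℝ) ^ ((1:ℝ)/2) = sd := by
          rw [hsd_def, Real.sqrt_eq_rpow]
        have hd32 : (d:ℝ) ^ ((3:ℝ)/2) = sd ^ 3 := by
          rw [show ((3:ℝ)/2) = (1/2) * (3:ℕ) by norm_num,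
            Real.rpow_mul (by positivity), Real.rpow_natCast, ← hd12]
        have hd52 : (d:ℝ) ^ ((5:ℝ)/2) = sd ^ 5 := by
          rw [show ((5:ℝ)/2) = (1/2) * (5:ℕ) by norm_num,
            Real.rpow_mul (by positivity), Real.rpow_natCast, ← hd12]
        have hd2 : (d:ℝ) ^ 2 = sd ^ 4 := by rw [← hsd2]; ring
        rw [hd12, hd32, hd52, hd2, ← hsd2, hC0]
        nlinarith [pow_nonneg hsd0 5, pow_nonneg hsd0 4, pow_nonneg hsd0 3,
          sq_nonneg sd, hsd0, hsd1]
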